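/- In the enlarged canonical space construction for two solutions of the FBSDE, define z^i_t := lim_{n→∞} n(ζ^i_t − ζ^i_{(t−1/n)^+}) whenever the limit exists and z^i_t := 0 otherwise, for i = 1,2. Then Q-almost surely ζ^i_t = ∫_0^t z^i_s ds for all t ≥ 0, and E^Q[∫_0^∞ e^{−rt}|z^i_t|² dt] ≤ E^{P^i}[∫_0^∞ e^{−rt}|Z^i_t|² dt]. -/

import Mathlib

open MeasureTheory ProbabilityTheory Real Filter Set
open scoped ENNReal NNReal

noncomputable section

namespace YW

/-! ### Path spaces -/

/-- Continuous real paths (indexed by `ℝ`; only times `t ≥ 0` are relevant). -/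
def Cp : Type := C(ℝ, ℝ)

/-- Continuous real paths starting at `0`, i.e. `C_0([0,∞);ℝ)`. -/
def C0 : Type := {w : C(ℝ, ℝ) // w 0 = 0}

/-- Evaluation of a path at time `t`. -/
def evp (t : ℝ) (w : Cp) : ℝ := ContinuousMap.toFun w t

/-- Evaluation of a path starting at `0` at time `t`. -/
def ev (t : ℝ) (w : C0) : ℝ := ContinuousMap.toFun w.1 t

/-- The cylinder σ-algebra `σ(w(s) : s ≥ 0)` on `Cp`. -/
instance : MeasurableSpace Cp :=
  ⨆ s ∈ Set.Ici (0:ℝ), MeasurableSpace.comap (evp s) (borel ℝ)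

/-- The σ-algebra `B_∞ = σ(w(s) : s ≥ 0)` on `C0`, used as its measurable structure. -/
instance : MeasurableSpace C0 :=
  ⨆ s ∈ Set.Ici (0:ℝ), MeasurableSpace.comap (ev s) (borel ℝ)

/-- The σ-algebra `B_t = σ(w(s) : 0 ≤ s ≤ t)` on `C0`. -/
def pathFilt (t : ℝ) : MeasurableSpace C0 :=
  ⨆ s ∈ Set.Icc (0:ℝ) t, MeasurableSpace.comap (ev s) (borel ℝ)

/-- Augmentation (completion) of a σ-algebra `m₀` on `α` by the `μ`-null sets, where `μ` is a
measure on the ambient σ-algebra `mAmb`. -/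
def augment {α : Type} (m₀ mAmb : MeasurableSpace α) (μ : @Measure α mAmb) :
    MeasurableSpace α :=
  m₀ ⊔ MeasurableSpace.generateFrom
    {s | ∃ t, @MeasurableSet α mAmb t ∧ μ t = 0 ∧ s ⊆ t}

/-- The completed σ-algebra `B̄_∞` on `C0` (w.r.t. the Wiener measure `μW`). -/
def mbarInf (μW : Measure C0) : MeasurableSpace C0 :=
  augment inferInstance inferInstance μW

/-- The augmented filtration `B̄_t` on `C0` (w.r.t. the Wiener measure `μW`). -/
def mbar (μW : Measure C0) (t : ℝ) : MeasurableSpace C0 :=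
  augment (pathFilt t) inferInstance μW

/-! ### Brownian motion, `L_r²` spaces and set-ups -/

variable {Ω : Type} [mΩ : MeasurableSpace Ω]

/-- `B` is a Brownian motion with respect to the family of σ-algebras `𝔽` under `P`. -/
def IsBMFam (P : Measure Ω) (𝔽 : ℝ → MeasurableSpace Ω) (B : ℝ → Ω → ℝ) : Prop :=
  (∀ᵐ ω ∂P, B 0 ω = 0) ∧
  (∀ t, 0 ≤ t → @Measurable Ω ℝ (𝔽 t) _ (B t)) ∧
  (∀ s t, 0 ≤ s → s ≤ t →
    P.map (fun ω => B t ω - B s ω) = gaussianReal 0 (Real.toNNReal (t - s))) ∧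
  (∀ s t, 0 ≤ s → s ≤ t →
    Indep (MeasurableSpace.comap (fun ω => B t ω - B s ω) (borel ℝ)) (𝔽 s) P)

/-- The squared exponentially weighted norm `‖v‖_r² = E[∫_0^∞ e^{-rt}|v_t|² dt]`. -/
noncomputable def rNormSq (P : Measure Ω) (r : ℝ) (v : ℝ → Ω → ℝ) : ℝ≥0∞ :=
  ∫⁻ ω, ∫⁻ t in Set.Ioi (0 : ℝ), ENNReal.ofReal (Real.exp (-r * t) * (v t ω) ^ 2) ∂volume ∂P

/-- Membership in `L_r²`. -/
def MemLr (P : Measure Ω) (r : ℝ) (v : ℝ → Ω → ℝ) : Prop := rNormSq P r v < ⊤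

/-- The analogous squared norm for `ℝ^m`-valued processes. -/
noncomputable def rNormSqV (P : Measure Ω) (r : ℝ) {m : ℕ}
    (v : ℝ → Ω → Fin m → ℝ) : ℝ≥0∞ :=
  ∫⁻ ω, ∫⁻ t in Set.Ioi (0 : ℝ), ENNReal.ofReal (Real.exp (-r * t) * ‖v t ω‖ ^ 2) ∂volume ∂P

/-- A set-up: a complete filtered probability space carrying a Brownian motion `B` (recorded
through its path map `Bp : Ω → C0`) and `F₀`-measurable square-integrable inputs `ξ, η`. -/
def IsSetup (P : Measure Ω) (𝔽 : ℝ → MeasurableSpace Ω)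
    (Bp : Ω → C0) (ξ η : Ω → ℝ) : Prop :=
  IsProbabilityMeasure P ∧ Monotone 𝔽 ∧ (∀ t, 𝔽 t ≤ mΩ) ∧
  Measurable Bp ∧ IsBMFam P 𝔽 (fun t ω => ev t (Bp ω)) ∧
  @Measurable Ω ℝ (𝔽 0) _ ξ ∧ MemLp ξ 2 P ∧
  @Measurable Ω ℝ (𝔽 0) _ η ∧ MemLp η 2 P

/-- Conditions on the coefficients `φ, ψ : ℝ × ℝ⁺ × C_0([0,∞);ℝ) → ℝ^m`:
measurability w.r.t. `B(ℝ) ⊗ B(ℝ⁺) ⊗ B̄_∞`, continuity in `t`, and `B̄_t`-adaptedness. -/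
def GoodCoef {m : ℕ} (μW : Measure C0) (φ : ℝ → ℝ → C0 → Fin m → ℝ) : Prop :=
  @Measurable (ℝ × ℝ × C0) (Fin m → ℝ)
    (MeasurableSpace.prod inferInstance
      (MeasurableSpace.prod inferInstance (mbarInf μW))) _
    (fun q => φ q.1 q.2.1 q.2.2) ∧
  (∀ x w, Continuous fun t => φ x t w) ∧
  (∀ x t, @Measurable C0 (Fin m → ℝ) (mbar μW t) _ (φ x t))

/-- `(X,Y,Z)` is an `L_r²` solution of the FBSDE (3.25):
`dX_t = G(t, X_t, Y_t, L_{(X_t, φ_t(η,B))}, ψ_t(η,B))dt + dB_t`,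
`dY_t = -F(t, X_t, Y_t, L_{(X_t, φ_t(η,B))}, ψ_t(η,B))dt + Z_t dB_t`, `X_0 = ξ`,
where `SI Z` denotes the stochastic integral `∫_0^· Z_s dB_s`. -/
def Solves (P : Measure Ω) (𝔽 : ℝ → MeasurableSpace Ω)
    (Bp : Ω → C0) (SI : (ℝ → Ω → ℝ) → ℝ → Ω → ℝ)
    {m : ℕ} (r : ℝ)
    (G F : ℝ → ℝ → ℝ → Measure (ℝ × (Fin m → ℝ)) → (Fin m → ℝ) → ℝ)
    (φ ψ : ℝ → ℝ → C0 → Fin m → ℝ)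
    (ξ η : Ω → ℝ) (X Y Z : ℝ → Ω → ℝ) : Prop :=
  (∀ t, 0 ≤ t → @Measurable Ω ℝ (𝔽 t) _ (X t) ∧ @Measurable Ω ℝ (𝔽 t) _ (Y t) ∧
    @Measurable Ω ℝ (𝔽 t) _ (Z t)) ∧
  MemLr P r X ∧ MemLr P r Y ∧ MemLr P r Z ∧
  (∀ᵐ ω ∂P, X 0 ω = ξ ω) ∧
  (∀ t, 0 ≤ t → ∀ᵐ ω ∂P,
    X t ω = ξ ω + (∫ s in (0:ℝ)..t,
        G s (X s ω) (Y s ω)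
          (P.map fun ω' => (X s ω', φ (η ω') s (Bp ω')))
          (ψ (η ω) s (Bp ω)))
      + ev t (Bp ω)) ∧
  (∀ t, 0 ≤ t → ∀ᵐ ω ∂P,
    Y t ω = Y 0 ω - (∫ s in (0:ℝ)..t,
        F s (X s ω) (Y s ω)
          (P.map fun ω' => (X s ω', φ (η ω') s (Bp ω')))
          (ψ (η ω) s (Bp ω)))
      + SI Z t ω)


/-! ### The enlarged canonical space -/

/-- `Ω_input = ℝ² × C_0([0,∞);ℝ)`. -/
abbrev Ωin : Type := ℝ × ℝ × C0

/-- `Ω_output = C([0,∞);ℝ)³`. -/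
abbrev Ωout : Type := Cp × Cp × Cp

/-- `Ω_canon = Ω_input × Ω_output`. -/
abbrev Ωcanon : Type := Ωin × Ωout

/-- `Ω_total = Ω_input × Ω_output × Ω_output`. -/
abbrev Ωtot : Type := Ωin × Ωout × Ωout

/-- canonical coordinates on `Ω_total` -/
def ca (ωT : Ωtot) : ℝ := ωT.1.1
def cb (ωT : Ωtot) : ℝ := ωT.1.2.1
def cw (t : ℝ) (ωT : Ωtot) : ℝ := ev t ωT.1.2.2
def cx1 (t : ℝ) (ωT : Ωtot) : ℝ := evp t ωT.2.1.1
def cy1 (t : ℝ) (ωT : Ωtot) : ℝ := evp t ωT.2.1.2.1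
def cz1 (t : ℝ) (ωT : Ωtot) : ℝ := evp t ωT.2.1.2.2
def cx2 (t : ℝ) (ωT : Ωtot) : ℝ := evp t ωT.2.2.1
def cy2 (t : ℝ) (ωT : Ωtot) : ℝ := evp t ωT.2.2.2.1
def cz2 (t : ℝ) (ωT : Ωtot) : ℝ := evp t ωT.2.2.2.2

open Classical in
/-- The density `z_t = lim_n n(ζ_t − ζ_{(t−1/n)⁺})` of an absolutely continuous path `ζ`
(defined as `0` whenever the limit does not exist). -/
noncomputable def dlim (ζ : ℝ → ℝ) (t : ℝ) : ℝ :=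
  if h : ∃ L : ℝ, Tendsto (fun n : ℕ => (n : ℝ) * (ζ t - ζ (max (t - 1/(n : ℝ)) 0)))
      atTop (nhds L) then h.choose else 0


/-!
Under `Q` the coordinate `ζⁱ` has the law of `∫₀^· Zⁱ_s ds` under `Pⁱ`, because the `i`-th
output marginal of `Q` is that of `Qⁱ`. So it suffices to prove the two claims for every path
`w = ∫₀^· f` and to check that they are measurable properties of the path.

For one path, let `T` be the time up to which `f` is interval integrable. Below `T`, Lebesgue's
differentiation theorem gives `dlim w = f` a.e.; beyond `T`, `w` vanishes because the interval
integral of a non-integrable function is `0`, hence so does `dlim w`. Thus `w` is the primitive of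
`dlim w` and `(dlim w)² ≤ f²` a.e. By continuity, being the primitive of `dlim w` only has to be
checked at rational times, which makes it a measurable condition on `w`.
-/

open scoped Topology Interval

def dlimSeq (ζ : ℝ → ℝ) (t : ℝ) (n : ℕ) : ℝ := n * (ζ t - ζ (max (t - 1 / n) 0))

theorem dlim_eq_of_tendsto {ζ : ℝ → ℝ} {t L : ℝ} (h : Tendsto (dlimSeq ζ t) atTop (𝓝 L)) :
    dlim ζ t = L :=
  have hex : ∃ L, Tendsto (dlimSeq ζ t) atTop (𝓝 L) := ⟨L, h⟩
  (dif_pos hex).trans (tendsto_nhds_unique hex.choose_spec h)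

open Classical in
theorem dlim_eq_piecewise (ζ : ℝ → ℝ) (t : ℝ) :
    dlim ζ t = if ∃ L, Tendsto (dlimSeq ζ t) atTop (𝓝 L)
      then limUnder atTop (dlimSeq ζ t) else 0 := by
  split_ifs with h
  · exact dlim_eq_of_tendsto (tendsto_nhds_limUnder h)
  · exact dif_neg h

theorem measurable_dlim {X : Type*} [MeasurableSpace X] {ζ : X → ℝ → ℝ} {τ : X → ℝ}
    (h : ∀ n, Measurable fun x => dlimSeq (ζ x) (τ x) n) :
    Measurable fun x => dlim (ζ x) (τ x) := by
  simp_rw [dlim_eq_piecewise]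
  exact Measurable.ite
    (StronglyMeasurable.measurableSet_exists_tendsto (l := atTop) fun n =>
      (h n).stronglyMeasurable)
    (StronglyMeasurable.limUnder fun n => (h n).stronglyMeasurable).measurable measurable_const

theorem dlim_congr {ζ ζ' : ℝ → ℝ} {t : ℝ} (ht : 0 ≤ t) (h : EqOn ζ ζ' (Ici 0)) :
    dlim ζ t = dlim ζ' t := by
  have : dlimSeq ζ t = dlimSeq ζ' t := funext fun n => by
    simp only [dlimSeq, h (mem_Ici.2 ht), h (mem_Ici.2 (le_max_right _ _))]
  rw [dlim_eq_piecewise, dlim_eq_piecewise, this]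

theorem dlim_eq_of_hasDerivAt {ζ : ℝ → ℝ} {t L : ℝ} (h : HasDerivAt ζ L t) (ht : 0 < t) :
    dlim ζ t = L := by
  have hstep : Tendsto (fun n : ℕ => t - 1 / n) atTop (𝓝[≠] t) := by
    refine tendsto_nhdsWithin_iff.2 ⟨?_, ?_⟩
    · simpa using tendsto_const_nhds.sub (tendsto_one_div_atTop_nhds_zero_nat (𝕜 := ℝ))
    · filter_upwards [eventually_gt_atTop 0] with n hn
      simp only [mem_compl_iff, mem_singleton_iff, sub_eq_self, one_div, inv_eq_zero]
      exact_mod_cast hn.ne'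
  refine dlim_eq_of_tendsto ((hasDerivAt_iff_tendsto_slope.1 h).comp hstep |>.congr' ?_)
  filter_upwards [tendsto_one_div_atTop_nhds_zero_nat (𝕜 := ℝ).eventually_lt_const ht,
    eventually_gt_atTop 0] with n hn hn0
  have hn0' : (n : ℝ) ≠ 0 := by exact_mod_cast hn0.ne'
  simp only [Function.comp_apply, slope_def_field, dlimSeq, max_eq_left (sub_pos.2 hn).le]
  field_simp
  ring

theorem dlim_eq_zero_of_eqOn {ζ : ℝ → ℝ} {s t : ℝ} (hs : 0 ≤ s) (hst : s < t)
    (h : EqOn ζ 0 (Ioc s t)) : dlim ζ t = 0 := by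
  refine dlim_eq_of_tendsto (tendsto_const_nhds.congr' ?_)
  filter_upwards [(tendsto_one_div_atTop_nhds_zero_nat (𝕜 := ℝ)).eventually_lt_const
    (sub_pos.2 hst), eventually_gt_atTop 0] with n hn hn0
  have hpos : (0 : ℝ) < 1 / n := by positivity
  have hmax : max (t - 1 / n) 0 = t - 1 / n := max_eq_left (by linarith)
  rw [dlimSeq, hmax, h ⟨hst, le_rfl⟩, h ⟨by linarith, by linarith⟩]
  simp

theorem _root_.MeasureTheory.IntervalIntegrable.mono_upper {f : ℝ → ℝ} {s t : ℝ}
    (h : IntervalIntegrable f volume 0 t) (hs : 0 ≤ s) (hst : s ≤ t) :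
    IntervalIntegrable f volume 0 s :=
  h.mono_set (by rw [uIcc_of_le hs, uIcc_of_le (hs.trans hst)]; exact Icc_subset_Icc_right hst)

theorem exists_intervalIntegrable_threshold (f : ℝ → ℝ) {t : ℝ} (ht : 0 ≤ t) :
    ∃ T ∈ Icc 0 t, (∀ s ∈ Ico 0 T, IntervalIntegrable f volume 0 s) ∧
      ∀ s ∈ Ioc T t, ¬ IntervalIntegrable f volume 0 s := by
  set A := {s ∈ Icc 0 t | IntervalIntegrable f volume 0 s}
  have h0A : (0 : ℝ) ∈ A := ⟨⟨le_rfl, ht⟩, IntervalIntegrable.refl⟩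
  have hbdd : BddAbove A := ⟨t, fun s hs => hs.1.2⟩
  refine ⟨sSup A, ⟨le_csSup hbdd h0A, csSup_le ⟨0, h0A⟩ fun s hs => hs.1.2⟩,
    fun s hs => ?_, fun s hs hint => ?_⟩
  · obtain ⟨b, hb, hsb⟩ := exists_lt_of_lt_csSup ⟨0, h0A⟩ hs.2
    exact hb.2.mono_upper hs.1 hsb.le
  · have hs0 : 0 ≤ s := (le_csSup hbdd h0A).trans hs.1.le
    exact hs.1.not_ge (le_csSup hbdd ⟨⟨hs0, hs.2⟩, hint⟩)

section Primitive

variable {w f : ℝ → ℝ}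

theorem ae_dlim_eq_of_intervalIntegrable (hw : ∀ t, 0 ≤ t → w t = ∫ s in (0:ℝ)..t, f s)
    {T : ℝ} (hT : ∀ s ∈ Ico 0 T, IntervalIntegrable f volume 0 s) :
    dlim w =ᵐ[volume.restrict (Ioc 0 T)] f := by
  have hq : ∀ q : ℚ, ∀ᵐ s, (q : ℝ) ∈ Ico 0 T → s ∈ Ioo 0 (q : ℝ) → dlim w s = f s := by
    intro q
    by_cases hqT : (q : ℝ) ∈ Ico 0 T
    · filter_upwards [(hT q hqT).ae_hasDerivAt_integral] with s hs _ hsq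
      have hsI : s ∈ uIcc 0 (q : ℝ) := by rw [uIcc_of_le hqT.1]; exact Ioo_subset_Icc_self hsq
      refine dlim_eq_of_hasDerivAt ((hs hsI 0 left_mem_uIcc).congr_of_eventuallyEq ?_) hsq.1
      filter_upwards [Ioo_mem_nhds hsq.1 hsq.2] with u hu using hw u hu.1.le
    · exact ae_of_all _ fun _ h => absurd h hqT
  rw [← restrict_Ioo_eq_restrict_Ioc, EventuallyEq, ae_restrict_iff' measurableSet_Ioo]
  filter_upwards [ae_all_iff.2 hq] with s hs hsT
  obtain ⟨q, hsq, hqT⟩ := exists_rat_btwn hsT.2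
  exact hs q ⟨hsT.1.le.trans hsq.le, hqT⟩ ⟨hsT.1, hsq⟩

theorem eqOn_zero_of_not_intervalIntegrable (hw : ∀ t, 0 ≤ t → w t = ∫ s in (0:ℝ)..t, f s)
    {T t : ℝ} (hT : 0 ≤ T) (hnot : ∀ s ∈ Ioc T t, ¬ IntervalIntegrable f volume 0 s) :
    EqOn w 0 (Ioc T t) :=
  fun s hs => (hw s (hT.trans hs.1.le)).trans (intervalIntegral.integral_undef (hnot s hs))

theorem dlim_eqOn_zero_of_not_intervalIntegrable (hw : ∀ t, 0 ≤ t → w t = ∫ s in (0:ℝ)..t, f s)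
    {T t : ℝ} (hT : 0 ≤ T) (hnot : ∀ s ∈ Ioc T t, ¬ IntervalIntegrable f volume 0 s) :
    EqOn (dlim w) 0 (Ioc T t) :=
  fun _ hs => dlim_eq_zero_of_eqOn hT hs.1
    ((eqOn_zero_of_not_intervalIntegrable hw hT hnot).mono (Ioc_subset_Ioc_right hs.2))

theorem ae_sq_dlim_le (hw : ∀ t, 0 ≤ t → w t = ∫ s in (0:ℝ)..t, f s) :
    ∀ᵐ s ∂volume.restrict (Ioi 0), dlim w s ^ 2 ≤ f s ^ 2 := by
  have hwindow : ∀ n : ℕ, ∀ᵐ s, s ∈ Ioc 0 (n : ℝ) → dlim w s ^ 2 ≤ f s ^ 2 := by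
    intro n
    obtain ⟨T, ⟨hT0, -⟩, hbelow, habove⟩ := exists_intervalIntegrable_threshold f n.cast_nonneg
    filter_upwards [ae_imp_of_ae_restrict (ae_dlim_eq_of_intervalIntegrable hw hbelow)]
      with s hs hsn
    rcases le_or_gt s T with hsT | hTs
    · rw [hs ⟨hsn.1, hsT⟩]
    · rw [dlim_eqOn_zero_of_not_intervalIntegrable hw hT0 habove ⟨hTs, hsn.2⟩]
      simpa using sq_nonneg (f s)
  rw [ae_restrict_iff' measurableSet_Ioi]
  filter_upwards [ae_all_iff.2 hwindow] with s hs hs0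
  obtain ⟨n, hn⟩ := exists_nat_ge s
  exact hs n ⟨hs0, hn⟩

theorem eq_integral_dlim (hw : ∀ t, 0 ≤ t → w t = ∫ s in (0:ℝ)..t, f s) (hwc : Continuous w)
    {t : ℝ} (ht : 0 ≤ t) :
    w t = ∫ s in (0:ℝ)..t, dlim w s := by
  obtain ⟨T, ⟨hT0, hTt⟩, hbelow, habove⟩ := exists_intervalIntegrable_threshold f ht
  have hae : dlim w =ᵐ[volume.restrict (Ι 0 T)] f := by
    rw [uIoc_of_le hT0]; exact ae_dlim_eq_of_intervalIntegrable hw hbelow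
  have hdlim0 := dlim_eqOn_zero_of_not_intervalIntegrable hw hT0 habove
  by_cases hfT : IntervalIntegrable f volume 0 T
  · have hgT : IntervalIntegrable (dlim w) volume 0 T := hfT.congr_ae hae.symm
    have hgTt : IntervalIntegrable (dlim w) volume T t := by
      refine (intervalIntegrable_congr ?_).1 (intervalIntegrable_const (c := (0 : ℝ)))
      rw [uIoc_of_le hTt]; exact fun s hs => (hdlim0 hs).symm
    have hzero : ∫ s in T..t, dlim w s = 0 := by
      rw [intervalIntegral.integral_congr_ae (g := 0) (ae_of_all _ fun s hs => ?_)]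
      · exact intervalIntegral.integral_zero
      · rw [uIoc_of_le hTt] at hs; exact hdlim0 hs
    have hwT : w t = w T := by
      rcases hTt.eq_or_lt with rfl | hlt
      · rfl
      have h := (eqOn_zero_of_not_intervalIntegrable hw hT0 habove).of_subset_closure
        hwc.continuousOn continuousOn_const Ioc_subset_Icc_self (closure_Ioc hlt.ne).ge
      exact (h ⟨hlt.le, le_rfl⟩).trans (h ⟨le_rfl, hlt.le⟩).symm
    calc w t = w T := hwT
      _ = ∫ s in (0:ℝ)..T, f s := hw T hT0
      _ = ∫ s in (0:ℝ)..T, dlim w s := (intervalIntegral.integral_congr_ae_restrict hae).symm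
      _ = ∫ s in (0:ℝ)..t, dlim w s := by
        rw [← intervalIntegral.integral_add_adjacent_intervals hgT hgTt, hzero, add_zero]
  · have hft : ¬ IntervalIntegrable f volume 0 t := fun h => hfT (h.mono_upper hT0 hTt)
    have hgt : ¬ IntervalIntegrable (dlim w) volume 0 t := fun h =>
      hfT ((h.mono_upper hT0 hTt).congr_ae hae)
    rw [hw t ht, intervalIntegral.integral_undef hft, intervalIntegral.integral_undef hgt]

theorem lintegral_exp_mul_sq_dlim_le (hw : ∀ t, 0 ≤ t → w t = ∫ s in (0:ℝ)..t, f s) (r : ℝ) :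
    ∫⁻ t in Ioi 0, ENNReal.ofReal (exp (-r * t) * dlim w t ^ 2)
      ≤ ∫⁻ t in Ioi 0, ENNReal.ofReal (exp (-r * t) * f t ^ 2) :=
  lintegral_mono_ae (by filter_upwards [ae_sq_dlim_le hw] with t ht; gcongr)

end Primitive

theorem Icc_subset_closure_inter_range_ratCast {a b : ℝ} (hab : a < b) :
    Icc a b ⊆ closure (Icc a b ∩ range ((↑) : ℚ → ℝ)) :=
  calc Icc a b = closure (Ioo a b) := (closure_Ioo hab.ne).symm
    _ ⊆ closure (Ioo a b ∩ range ((↑) : ℚ → ℝ)) :=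
      closure_minimal (Rat.denseRange_cast.open_subset_closure_inter isOpen_Ioo) isClosed_closure
    _ ⊆ closure (Icc a b ∩ range ((↑) : ℚ → ℝ)) :=
      closure_mono (inter_subset_inter_left _ Ioo_subset_Icc_self)

theorem eqOn_Icc_of_forall_ratCast {F G : ℝ → ℝ} {a b : ℝ} (hab : a < b)
    (hF : ContinuousOn F (Icc a b)) (hG : ContinuousOn G (Icc a b))
    (h : ∀ q : ℚ, (q : ℝ) ∈ Icc a b → F q = G q) : EqOn F G (Icc a b) :=
  EqOn.of_subset_closure (by rintro _ ⟨hx, q, rfl⟩; exact h q hx) hF hG inter_subset_left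
    (Icc_subset_closure_inter_range_ratCast hab)

theorem eq_integral_of_forall_ratCast {w g : ℝ → ℝ} (hwc : Continuous w)
    (h : ∀ q : ℚ, 0 ≤ (q : ℝ) → w q = ∫ s in (0:ℝ)..q, g s) {t : ℝ} (ht : 0 ≤ t) :
    w t = ∫ s in (0:ℝ)..t, g s := by
  by_cases hg : IntervalIntegrable g volume 0 t
  · rcases ht.eq_or_lt with rfl | ht0
    · simpa using h 0 (by norm_num)
    have hprim : ContinuousOn (fun x => ∫ s in (0:ℝ)..x, g s) (Icc 0 t) := by
      simpa only [uIcc_of_le ht] using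
        intervalIntegral.continuousOn_primitive_interval' hg left_mem_uIcc
    exact eqOn_Icc_of_forall_ratCast ht0 hwc.continuousOn hprim (fun q hq => h q hq.1)
      ⟨ht, le_rfl⟩
  · rw [intervalIntegral.integral_undef hg]
    refine eqOn_Icc_of_forall_ratCast (lt_add_one t) hwc.continuousOn continuousOn_const
      (fun q hq => ?_) ⟨le_rfl, (lt_add_one t).le⟩
    rw [h q (ht.trans hq.1),
      intervalIntegral.integral_undef fun hq' => hg (hq'.mono_upper ht hq.1)]

theorem measurable_evp {s : ℝ} (hs : 0 ≤ s) : Measurable (evp s) := by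
  rw [measurable_iff_comap_le,
    show (Real.measurableSpace : MeasurableSpace ℝ) = borel ℝ from BorelSpace.measurable_eq]
  exact le_iSup₂ (f := fun u (_ : u ∈ Ici (0 : ℝ)) => MeasurableSpace.comap (evp u) (borel ℝ))
    s hs

theorem continuous_evp (w : Cp) : Continuous fun t => evp t w :=
  ContinuousMap.continuous (show C(ℝ, ℝ) from w)

/-- Truncating time at `0` makes this jointly measurable: the σ-algebra of `Cp` does not see
negative times. -/
def pathDensity (w : Cp) (t : ℝ) : ℝ := dlim (fun u => evp (max u 0) w) t

theorem dlim_evp_eq_pathDensity (w : Cp) {t : ℝ} (ht : 0 ≤ t) :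
    dlim (fun u => evp u w) t = pathDensity w t :=
  dlim_congr ht fun u hu => by simp only [max_eq_left (mem_Ici.1 hu)]

theorem measurable_pathDensity : Measurable (Function.uncurry pathDensity) := by
  have hev : Measurable fun p : ℝ × Cp => evp (max p.1 0) p.2 :=
    measurable_uncurry_of_continuous_of_measurable
      (fun w => (continuous_evp w).comp (continuous_id.max continuous_const))
      (fun t => measurable_evp (le_max_right t 0))
  refine measurable_dlim (ζ := fun p : Cp × ℝ => fun u => evp (max u 0) p.1) (τ := Prod.snd)
    fun n => measurable_const.mul ?_
  exact (hev.comp (measurable_snd.prodMk measurable_fst)).sub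
    (hev.comp (((measurable_snd.sub_const _).max measurable_const).prodMk measurable_fst))

def dlimPrimitivePaths : Set Cp :=
  {w | ∀ t, 0 ≤ t → evp t w = ∫ s in (0:ℝ)..t, dlim (fun u => evp u w) s}

theorem measurableSet_dlimPrimitivePaths : MeasurableSet dlimPrimitivePaths := by
  have hint : ∀ {t : ℝ}, 0 ≤ t → ∀ w,
      ∫ s in (0:ℝ)..t, dlim (fun u => evp u w) s = ∫ s in Ioc 0 t, pathDensity w s := by
    intro t ht w
    rw [intervalIntegral.integral_of_le ht]
    exact setIntegral_congr_fun measurableSet_Ioc fun s hs => dlim_evp_eq_pathDensity w hs.1.le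
  have hrat : dlimPrimitivePaths = ⋂ q : ℚ, ⋂ (_ : 0 ≤ (q : ℝ)),
      {w | evp q w = ∫ s in Ioc 0 (q : ℝ), pathDensity w s} := by
    ext w
    simp only [dlimPrimitivePaths, mem_iInter, mem_ofPred_eq]
    refine ⟨fun h q hq => (h q hq).trans (hint hq w), fun h t ht => ?_⟩
    exact eq_integral_of_forall_ratCast (continuous_evp w)
      (fun q hq => (h q hq).trans (hint hq w).symm) ht
  rw [hrat]
  exact .iInter fun q => .iInter fun hq => measurableSet_eq_fun (measurable_evp hq)
    (measurable_pathDensity.stronglyMeasurable.integral_prod_right'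
      (f := Function.uncurry pathDensity)).measurable

section Transfer

variable {Ω : Type} {Ω' : Type*} [MeasurableSpace Ω] [MeasurableSpace Ω'] {P : Measure Ω}
  {Q : Measure Ω'} {Z : ℝ → Ω → ℝ} {ZC : Ω → Cp} {pr : Ω' → Cp}

theorem ae_mem_dlimPrimitivePaths_of_map_eq
    (hZC : ∀ ω t, 0 ≤ t → evp t (ZC ω) = ∫ s in (0:ℝ)..t, Z s ω) (hmZC : Measurable ZC)
    (hpr : Measurable pr) (hmap : Q.map pr = P.map ZC) :
    ∀ᵐ x ∂Q, pr x ∈ dlimPrimitivePaths := by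
  have hS := measurableSet_dlimPrimitivePaths
  rw [← ae_map_iff (p := (· ∈ dlimPrimitivePaths)) hpr.aemeasurable hS, hmap,
    ae_map_iff (p := (· ∈ dlimPrimitivePaths)) hmZC.aemeasurable hS]
  exact ae_of_all _ fun ω t ht => eq_integral_dlim (hZC ω) (continuous_evp _) ht

theorem lintegral_exp_mul_sq_dlim_le_rNormSq_of_map_eq
    (hZC : ∀ ω t, 0 ≤ t → evp t (ZC ω) = ∫ s in (0:ℝ)..t, Z s ω) (hmZC : Measurable ZC)
    (hpr : Measurable pr) (hmap : Q.map pr = P.map ZC) (r : ℝ) :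
    ∫⁻ x, ∫⁻ t in Ioi 0, ENNReal.ofReal (exp (-r * t) * dlim (fun u => evp u (pr x)) t ^ 2)
        ∂volume ∂Q
      ≤ rNormSq P r Z := by
  set Φ : Cp → ℝ≥0∞ := fun w =>
    ∫⁻ t in Ioi 0, ENNReal.ofReal (exp (-r * t) * pathDensity w t ^ 2)
  have hΦ : Measurable Φ :=
    (ENNReal.measurable_ofReal.comp ((measurable_const.mul measurable_snd).exp.mul
      (measurable_pathDensity.pow_const 2))).lintegral_prod_right'
  have hΦeq : ∀ w,
      ∫⁻ t in Ioi 0, ENNReal.ofReal (exp (-r * t) * dlim (fun u => evp u w) t ^ 2) = Φ w :=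
    fun w => setLIntegral_congr_fun measurableSet_Ioi fun t ht => by
      rw [dlim_evp_eq_pathDensity w (le_of_lt ht)]
  calc _ = ∫⁻ x, Φ (pr x) ∂Q := by simp_rw [hΦeq]
    _ = ∫⁻ ω, Φ (ZC ω) ∂P := by rw [← lintegral_map hΦ hpr, hmap, lintegral_map hΦ hmZC]
    _ ≤ rNormSq P r Z := lintegral_mono fun ω => by
      rw [← hΦeq]; exact lintegral_exp_mul_sq_dlim_le (hZC ω) r

end Transfer

section Marginals

variable {α β γ : Type*} [MeasurableSpace α] [MeasurableSpace β] [MeasurableSpace γ]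
  {μ : Measure α} {κ : α → Measure β} {ν : α → Measure γ} {Q : Measure (α × β × γ)}

theorem map_snd_fst_eq_map_snd [∀ a, IsProbabilityMeasure (ν a)]
    (hQ : ∀ (G : Set α) (F₁ : Set β) (F₂ : Set γ), MeasurableSet G → MeasurableSet F₁ →
      MeasurableSet F₂ → Q (G ×ˢ F₁ ×ˢ F₂) = ∫⁻ a in G, κ a F₁ * ν a F₂ ∂μ)
    {Q₁ : Measure (α × β)}
    (hQ₁ : ∀ (G : Set α) (F : Set β), MeasurableSet G → MeasurableSet F →
      Q₁ (G ×ˢ F) = ∫⁻ a in G, κ a F ∂μ) :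
    Q.map (fun x => x.2.1) = Q₁.map Prod.snd := by
  ext F hF
  have hpre : (fun x : α × β × γ => x.2.1) ⁻¹' F = univ ×ˢ F ×ˢ univ := by ext; simp
  rw [Measure.map_apply measurable_snd.fst hF, Measure.map_apply measurable_snd hF, hpre,
    ← univ_prod, hQ _ _ _ .univ hF .univ, hQ₁ _ _ .univ hF]
  simp

theorem map_snd_snd_eq_map_snd [∀ a, IsProbabilityMeasure (κ a)]
    (hQ : ∀ (G : Set α) (F₁ : Set β) (F₂ : Set γ), MeasurableSet G → MeasurableSet F₁ →
      MeasurableSet F₂ → Q (G ×ˢ F₁ ×ˢ F₂) = ∫⁻ a in G, κ a F₁ * ν a F₂ ∂μ)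
    {Q₂ : Measure (α × γ)}
    (hQ₂ : ∀ (G : Set α) (F : Set γ), MeasurableSet G → MeasurableSet F →
      Q₂ (G ×ˢ F) = ∫⁻ a in G, ν a F ∂μ) :
    Q.map (fun x => x.2.2) = Q₂.map Prod.snd := by
  ext F hF
  have hpre : (fun x : α × β × γ => x.2.2) ⁻¹' F = univ ×ˢ univ ×ˢ F := by ext; simp
  rw [Measure.map_apply measurable_snd.snd hF, Measure.map_apply measurable_snd hF, hpre,
    ← univ_prod, hQ _ _ _ .univ .univ hF, hQ₂ _ _ .univ hF]
  simp

end Marginals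

theorem IsSetup.measurable_input {Ω : Type} [MeasurableSpace Ω] {P : Measure Ω}
    {𝔽 : ℝ → MeasurableSpace Ω} {Bp : Ω → C0} {ξ η : Ω → ℝ} (h : IsSetup P 𝔽 Bp ξ η) :
    Measurable fun ω => ((ξ ω, η ω, Bp ω) : Ωin) := by
  obtain ⟨-, -, h𝔽, hBp, -, hξ, -, hη, -⟩ := h
  exact (hξ.mono (h𝔽 0) le_rfl).prodMk ((hη.mono (h𝔽 0) le_rfl).prodMk hBp)

theorem map_zeta_eq {Ω : Type} [MeasurableSpace Ω] {P : Measure Ω} {ι : Ω → Ωin}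
    {XC YC ZC : Ω → Cp} (hι : Measurable ι) (hXC : Measurable XC) (hYC : Measurable YC)
    (hZC : Measurable ZC) :
    ((P.map fun ω => (ι ω, (XC ω, YC ω, ZC ω))).map Prod.snd).map (fun o : Ωout => o.2.2)
      = P.map ZC := by
  have hg := hι.prodMk (hXC.prodMk (hYC.prodMk hZC))
  rw [Measure.map_map measurable_snd hg,
    Measure.map_map measurable_snd.snd (measurable_snd.comp hg)]
  rfl

theorem zeta_coordinates_absolutely_continuous_general
    (r : ℝ)
    -- the first set-up with its solution and the continuous-path versions of
    -- (X¹, Y¹, ∫_0^· Z¹_s ds)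
    {Ω₁ : Type} [mΩ₁ : MeasurableSpace Ω₁] (P₁ : Measure Ω₁)
    (𝔽₁ : ℝ → MeasurableSpace Ω₁) (Bp₁ : Ω₁ → C0)
    (ξ₁ η₁ : Ω₁ → ℝ)
    (hset₁ : IsSetup P₁ 𝔽₁ Bp₁ ξ₁ η₁)
    (Z₁ : ℝ → Ω₁ → ℝ)
    (XC₁ YC₁ ZC₁ : Ω₁ → Cp) (hmXC₁ : Measurable XC₁) (hmYC₁ : Measurable YC₁)
    (hmZC₁ : Measurable ZC₁)
    (hZC₁ : ∀ ω t, 0 ≤ t → evp t (ZC₁ ω) = ∫ s in (0:ℝ)..t, Z₁ s ω)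
    -- the second set-up
    {Ω₂ : Type} [mΩ₂ : MeasurableSpace Ω₂] (P₂ : Measure Ω₂)
    (𝔽₂ : ℝ → MeasurableSpace Ω₂) (Bp₂ : Ω₂ → C0)
    (ξ₂ η₂ : Ω₂ → ℝ)
    (hset₂ : IsSetup P₂ 𝔽₂ Bp₂ ξ₂ η₂)
    (Z₂ : ℝ → Ω₂ → ℝ)
    (XC₂ YC₂ ZC₂ : Ω₂ → Cp) (hmXC₂ : Measurable XC₂) (hmYC₂ : Measurable YC₂)
    (hmZC₂ : Measurable ZC₂)
    (hZC₂ : ∀ ω t, 0 ≤ t → evp t (ZC₂ ω) = ∫ s in (0:ℝ)..t, Z₂ s ω)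
    -- the common law of the inputs and the laws Q¹, Q² on the canonical space
    (Qin : Measure Ωin)
    (Q₁ : Measure Ωcanon)
    (hQ₁ : Q₁ = P₁.map (fun ω => (((ξ₁ ω, η₁ ω, Bp₁ ω) : Ωin), (XC₁ ω, YC₁ ω, ZC₁ ω))))
    (Q₂ : Measure Ωcanon)
    (hQ₂ : Q₂ = P₂.map (fun ω => (((ξ₂ ω, η₂ ω, Bp₂ ω) : Ωin), (XC₂ ω, YC₂ ω, ZC₂ ω))))
    -- regular conditional probabilities q¹, q² given the input coordinate
    (q1 q2 : Ωin → Measure Ωout)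
    (hq1prob : ∀ ι, IsProbabilityMeasure (q1 ι))
    (hq2prob : ∀ ι, IsProbabilityMeasure (q2 ι))
    (hq1dis : ∀ (Gs : Set Ωin) (A : Set Ωout), MeasurableSet Gs → MeasurableSet A →
      Q₁ (Gs ×ˢ A) = ∫⁻ ι in Gs, q1 ι A ∂Qin)
    (hq2dis : ∀ (Gs : Set Ωin) (A : Set Ωout), MeasurableSet Gs → MeasurableSet A →
      Q₂ (Gs ×ˢ A) = ∫⁻ ι in Gs, q2 ι A ∂Qin)
    -- the measure Q on the enlarged canonical space
    (QT : Measure Ωtot)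
    (hQT : ∀ (Gs : Set Ωin) (F₁ F₂ : Set Ωout),
      MeasurableSet Gs → MeasurableSet F₁ → MeasurableSet F₂ →
      QT (Gs ×ˢ F₁ ×ˢ F₂) = ∫⁻ ι in Gs, q1 ι F₁ * q2 ι F₂ ∂Qin)
    :
    (∀ᵐ ωT ∂QT, ∀ t, 0 ≤ t →
      cz1 t ωT = ∫ s in (0:ℝ)..t, dlim (fun u => cz1 u ωT) s) ∧
    (∀ᵐ ωT ∂QT, ∀ t, 0 ≤ t →
      cz2 t ωT = ∫ s in (0:ℝ)..t, dlim (fun u => cz2 u ωT) s) ∧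
    (∫⁻ ωT, ∫⁻ t in Set.Ioi (0:ℝ),
        ENNReal.ofReal (Real.exp (-r * t) * (dlim (fun u => cz1 u ωT) t) ^ 2) ∂volume ∂QT
      ≤ rNormSq P₁ r Z₁) ∧
    (∫⁻ ωT, ∫⁻ t in Set.Ioi (0:ℝ),
        ENNReal.ofReal (Real.exp (-r * t) * (dlim (fun u => cz2 u ωT) t) ^ 2) ∂volume ∂QT
      ≤ rNormSq P₂ r Z₂) := by
  have hmap₁ : QT.map (fun x => x.2.1.2.2) = P₁.map ZC₁ := by
    rw [← map_zeta_eq hset₁.measurable_input hmXC₁ hmYC₁ hmZC₁, ← hQ₁,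
      ← map_snd_fst_eq_map_snd hQT hq1dis, Measure.map_map measurable_snd.snd measurable_snd.fst]
    rfl
  have hmap₂ : QT.map (fun x => x.2.2.2.2) = P₂.map ZC₂ := by
    rw [← map_zeta_eq hset₂.measurable_input hmXC₂ hmYC₂ hmZC₂, ← hQ₂,
      ← map_snd_snd_eq_map_snd hQT hq2dis, Measure.map_map measurable_snd.snd measurable_snd.snd]
    rfl
  have hpr₁ : Measurable fun x : Ωtot => x.2.1.2.2 := measurable_snd.fst.snd.snd
  have hpr₂ : Measurable fun x : Ωtot => x.2.2.2.2 := measurable_snd.snd.snd.snd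
  exact ⟨ae_mem_dlimPrimitivePaths_of_map_eq hZC₁ hmZC₁ hpr₁ hmap₁,
    ae_mem_dlimPrimitivePaths_of_map_eq hZC₂ hmZC₂ hpr₂ hmap₂,
    lintegral_exp_mul_sq_dlim_le_rNormSq_of_map_eq hZC₁ hmZC₁ hpr₁ hmap₁ r,
    lintegral_exp_mul_sq_dlim_le_rNormSq_of_map_eq hZC₂ hmZC₂ hpr₂ hmap₂ r⟩

/-- **Densities of the `ζ`-coordinates on the enlarged canonical space.**
With `z^i_t := lim_n n(ζ^i_t − ζ^i_{(t−1/n)⁺})` (and `0` where the limit fails to exist),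
one has `Q`-a.s. `ζ^i_t = ∫_0^t z^i_s ds` for all `t ≥ 0`, and
`E^Q[∫_0^∞ e^{−rt}|z^i_t|² dt] ≤ E^{P^i}[∫_0^∞ e^{−rt}|Z^i_t|² dt]`, for `i = 1,2`. -/
theorem zeta_coordinates_absolutely_continuous
    (m : ℕ) (r : ℝ) (hr : 0 < r)
    (μW : Measure C0) (hμWprob : IsProbabilityMeasure μW)
    (hμW : IsBMFam μW pathFilt (fun t w => ev t w))
    (G F : ℝ → ℝ → ℝ → Measure (ℝ × (Fin m → ℝ)) → (Fin m → ℝ) → ℝ)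
    (φ ψ : ℝ → ℝ → C0 → Fin m → ℝ)
    (hφ : GoodCoef μW φ) (hψ : GoodCoef μW ψ)
    -- the first set-up with its solution and the continuous-path versions of
    -- (X¹, Y¹, ∫_0^· Z¹_s ds)
    {Ω₁ : Type} [mΩ₁ : MeasurableSpace Ω₁] (P₁ : Measure Ω₁)
    (𝔽₁ : ℝ → MeasurableSpace Ω₁) (Bp₁ : Ω₁ → C0)
    (SI₁ : (ℝ → Ω₁ → ℝ) → ℝ → Ω₁ → ℝ) (ξ₁ η₁ : Ω₁ → ℝ)
    (hset₁ : IsSetup P₁ 𝔽₁ Bp₁ ξ₁ η₁)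
    (X₁ Y₁ Z₁ : ℝ → Ω₁ → ℝ) (hsol₁ : Solves P₁ 𝔽₁ Bp₁ SI₁ r G F φ ψ ξ₁ η₁ X₁ Y₁ Z₁)
    (XC₁ YC₁ ZC₁ : Ω₁ → Cp) (hmXC₁ : Measurable XC₁) (hmYC₁ : Measurable YC₁)
    (hmZC₁ : Measurable ZC₁)
    (hXC₁ : ∀ ω t, 0 ≤ t → evp t (XC₁ ω) = X₁ t ω)
    (hYC₁ : ∀ ω t, 0 ≤ t → evp t (YC₁ ω) = Y₁ t ω)
    (hZC₁ : ∀ ω t, 0 ≤ t → evp t (ZC₁ ω) = ∫ s in (0:ℝ)..t, Z₁ s ω)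
    -- the second set-up
    {Ω₂ : Type} [mΩ₂ : MeasurableSpace Ω₂] (P₂ : Measure Ω₂)
    (𝔽₂ : ℝ → MeasurableSpace Ω₂) (Bp₂ : Ω₂ → C0)
    (SI₂ : (ℝ → Ω₂ → ℝ) → ℝ → Ω₂ → ℝ) (ξ₂ η₂ : Ω₂ → ℝ)
    (hset₂ : IsSetup P₂ 𝔽₂ Bp₂ ξ₂ η₂)
    (X₂ Y₂ Z₂ : ℝ → Ω₂ → ℝ) (hsol₂ : Solves P₂ 𝔽₂ Bp₂ SI₂ r G F φ ψ ξ₂ η₂ X₂ Y₂ Z₂)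
    (XC₂ YC₂ ZC₂ : Ω₂ → Cp) (hmXC₂ : Measurable XC₂) (hmYC₂ : Measurable YC₂)
    (hmZC₂ : Measurable ZC₂)
    (hXC₂ : ∀ ω t, 0 ≤ t → evp t (XC₂ ω) = X₂ t ω)
    (hYC₂ : ∀ ω t, 0 ≤ t → evp t (YC₂ ω) = Y₂ t ω)
    (hZC₂ : ∀ ω t, 0 ≤ t → evp t (ZC₂ ω) = ∫ s in (0:ℝ)..t, Z₂ s ω)
    -- the common law of the inputs and the laws Q¹, Q² on the canonical space
    (Qin : Measure Ωin)
    (hQin₁ : Qin = P₁.map (fun ω => ((ξ₁ ω, η₁ ω, Bp₁ ω) : Ωin)))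
    (hQin₂ : Qin = P₂.map (fun ω => ((ξ₂ ω, η₂ ω, Bp₂ ω) : Ωin)))
    (Q₁ : Measure Ωcanon)
    (hQ₁ : Q₁ = P₁.map (fun ω => (((ξ₁ ω, η₁ ω, Bp₁ ω) : Ωin), (XC₁ ω, YC₁ ω, ZC₁ ω))))
    (Q₂ : Measure Ωcanon)
    (hQ₂ : Q₂ = P₂.map (fun ω => (((ξ₂ ω, η₂ ω, Bp₂ ω) : Ωin), (XC₂ ω, YC₂ ω, ZC₂ ω))))
    -- regular conditional probabilities q¹, q² given the input coordinate
    (q1 q2 : Ωin → Measure Ωout)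
    (hq1prob : ∀ ι, IsProbabilityMeasure (q1 ι))
    (hq2prob : ∀ ι, IsProbabilityMeasure (q2 ι))
    (hq1meas : ∀ A : Set Ωout, MeasurableSet A → Measurable fun ι => q1 ι A)
    (hq2meas : ∀ A : Set Ωout, MeasurableSet A → Measurable fun ι => q2 ι A)
    (hq1dis : ∀ (Gs : Set Ωin) (A : Set Ωout), MeasurableSet Gs → MeasurableSet A →
      Q₁ (Gs ×ˢ A) = ∫⁻ ι in Gs, q1 ι A ∂Qin)
    (hq2dis : ∀ (Gs : Set Ωin) (A : Set Ωout), MeasurableSet Gs → MeasurableSet A →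
      Q₂ (Gs ×ˢ A) = ∫⁻ ι in Gs, q2 ι A ∂Qin)
    -- the measure Q on the enlarged canonical space
    (QT : Measure Ωtot) (hQTprob : IsProbabilityMeasure QT)
    (hQT : ∀ (Gs : Set Ωin) (F₁ F₂ : Set Ωout),
      MeasurableSet Gs → MeasurableSet F₁ → MeasurableSet F₂ →
      QT (Gs ×ˢ F₁ ×ˢ F₂) = ∫⁻ ι in Gs, q1 ι F₁ * q2 ι F₂ ∂Qin)
    :
    (∀ᵐ ωT ∂QT, ∀ t, 0 ≤ t →
      cz1 t ωT = ∫ s in (0:ℝ)..t, dlim (fun u => cz1 u ωT) s) ∧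
    (∀ᵐ ωT ∂QT, ∀ t, 0 ≤ t →
      cz2 t ωT = ∫ s in (0:ℝ)..t, dlim (fun u => cz2 u ωT) s) ∧
    (∫⁻ ωT, ∫⁻ t in Set.Ioi (0:ℝ),
        ENNReal.ofReal (Real.exp (-r * t) * (dlim (fun u => cz1 u ωT) t) ^ 2) ∂volume ∂QT
      ≤ rNormSq P₁ r Z₁) ∧
    (∫⁻ ωT, ∫⁻ t in Set.Ioi (0:ℝ),
        ENNReal.ofReal (Real.exp (-r * t) * (dlim (fun u => cz2 u ωT) t) ^ 2) ∂volume ∂QT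
      ≤ rNormSq P₂ r Z₂) :=
  zeta_coordinates_absolutely_continuous_general r (mΩ₁ := mΩ₁) P₁ 𝔽₁ Bp₁ ξ₁ η₁ hset₁ Z₁ XC₁ YC₁ ZC₁
    hmXC₁ hmYC₁ hmZC₁ hZC₁ (mΩ₂ := mΩ₂) P₂ 𝔽₂ Bp₂ ξ₂ η₂ hset₂ Z₂ XC₂ YC₂ ZC₂ hmXC₂ hmYC₂ hmZC₂ hZC₂
    Qin Q₁ hQ₁ Q₂ hQ₂ q1 q2 hq1prob hq2prob hq1dis hq2dis QT hQT

end YW
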